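/- Let Q(x) = ∫_x^∞ (2π)^{−1/2} e^{−u²/2} du and Q^{−1} its inverse on (0,1). Let priors P_0, P_1 ≥ 0 with P_0 + P_1 = 1, δ ∈ (0,1), and for l ∈ {0,1} probabilities p_H(l), p_B(l) ∈ (0,1) with q := max{p_H(0), p_H(1)} < min{p_B(0), p_B(1)}. With η(T) = T·q + Q^{−1}(δ)·√(T·q(1−q)) and a(l,T) = Q( (η(T) − T·p_B(l)) / √(T·p_B(l)(1−p_B(l))) ), one has lim_{T→∞} Σ_{l∈{0,1}} P_l · a(l,T) = 1. That is, for a parallel network (a tree of depth K = 1), the proposed reputation-based scheme asymptotically identifies every Byzantine node with probability one. -/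

import Mathlib

/-! Since `q < p_B(l)`, the threshold `η(T) = T q + O(√T)` falls below the Byzantine mean
`T p_B(l)` by order `T`, i.e. by order `√T` standard deviations: the argument of `Q` is
`√T (q - p_B(l)) / √(p_B(l) (1 - p_B(l))) + O(1) → -∞`, and `Q(x) → 1` as `x → -∞`. -/

open Filter

/-- The standard Gaussian tail function `Q(x) = ∫ₓ^∞ (2π)^{-1/2} e^{-u²/2} du`. -/
noncomputable def gaussQ (x : ℝ) : ℝ :=
  ∫ u in Set.Ioi x, (Real.sqrt (2 * Real.pi))⁻¹ * Real.exp (-(u ^ 2) / 2)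

open MeasureTheory Set Topology ProbabilityTheory

theorem tendsto_setIntegral_Ioi_atBot {E : Type*} [NormedAddCommGroup E] [NormedSpace ℝ E]
    {f : ℝ → E} (hf : Integrable f) :
    Tendsto (fun x => ∫ u in Ioi x, f u) atBot (𝓝 (∫ u, f u)) := by
  -- Over `ℝᵒᵈ`, `atTop` is `atBot` and `x ↦ Ioi x` is monotone.
  have hunion : ⋃ x : ℝᵒᵈ, Ioi (OrderDual.ofDual x) = univ :=
    eq_univ_of_forall fun u => mem_iUnion.2 ⟨OrderDual.toDual (u - 1), by simp⟩
  have h := tendsto_setIntegral_of_monotone (μ := volume) (f := f)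
    (s := fun x : ℝᵒᵈ => Ioi (OrderDual.ofDual x)) (fun _ => measurableSet_Ioi)
    (fun _ _ hxy => Ioi_subset_Ioi hxy) (hunion ▸ hf.integrableOn)
  rwa [hunion, setIntegral_univ] at h

theorem gaussQ_eq_setIntegral_gaussianPDFReal (x : ℝ) :
    gaussQ x = ∫ u in Ioi x, gaussianPDFReal 0 1 u := by
  simp [gaussQ, gaussianPDFReal]

theorem tendsto_gaussQ_atBot : Tendsto gaussQ atBot (𝓝 1) := by
  have h := tendsto_setIntegral_Ioi_atBot (integrable_gaussianPDFReal 0 1)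
  rw [integral_gaussianPDFReal_eq_one 0 one_ne_zero] at h
  simpa only [← gaussQ_eq_setIntegral_gaussianPDFReal] using h

theorem tendsto_threshold_sub_div_atBot {p q : ℝ} (c : ℝ) (hp₀ : 0 < p) (hp₁ : p < 1)
    (hqp : q < p) :
    Tendsto (fun T : ℝ =>
      (T * q + c * √(T * q * (1 - q)) - T * p) / √(T * p * (1 - p))) atTop atBot := by
  have hs : 0 < √(p * (1 - p)) := Real.sqrt_pos.2 (mul_pos hp₀ (sub_pos.2 hp₁))
  have hslope : (q - p) / √(p * (1 - p)) < 0 := div_neg_of_neg_of_pos (sub_neg.2 hqp) hs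
  refine (tendsto_atBot_add_const_right _ (c * √(q * (1 - q)) / √(p * (1 - p)))
    ((tendsto_mul_const_atBot_of_neg hslope).2 Real.tendsto_sqrt_atTop)).congr' ?_
  filter_upwards [eventually_gt_atTop 0] with T hT
  rw [mul_assoc T q, mul_assoc T p, Real.sqrt_mul hT.le, Real.sqrt_mul hT.le]
  field_simp
  linear_combination (q - p) * Real.mul_self_sqrt hT.le

theorem stmt_19_general
    (Qinv : ℝ → ℝ)
    (P0 P1 : ℝ) (hP : P0 + P1 = 1)
    (δ : ℝ)
    (pB : ℕ → ℝ)
    (hpB : ∀ l < 2, pB l ∈ Set.Ioo (0 : ℝ) 1)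
    (q : ℝ)
    (hqpB : q < min (pB 0) (pB 1))
    (η : ℝ → ℝ)
    (hη : ∀ T : ℝ, η T = T * q + Qinv δ * Real.sqrt (T * q * (1 - q)))
    (a : ℕ → ℝ → ℝ)
    (ha : ∀ l < 2, ∀ T : ℝ,
      a l T = gaussQ ((η T - T * pB l) / Real.sqrt (T * pB l * (1 - pB l)))) :
    Tendsto (fun T : ℝ => P0 * a 0 T + P1 * a 1 T) atTop (nhds 1) := by
  have ha_tendsto : ∀ l < 2, Tendsto (a l) atTop (𝓝 1) := by
    intro l hl
    have hqp : q < pB l := by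
      interval_cases l
      exacts [hqpB.trans_le (min_le_left _ _), hqpB.trans_le (min_le_right _ _)]
    refine (tendsto_gaussQ_atBot.comp (tendsto_threshold_sub_div_atBot (Qinv δ)
      (hpB l hl).1 (hpB l hl).2 hqp)).congr fun T => ?_
    simp only [Function.comp_apply, ha l hl, hη]
  simpa [hP] using ((ha_tendsto 0 two_pos).const_mul P0).add ((ha_tendsto 1 one_lt_two).const_mul P1)

/-- For a parallel network (tree of depth `K = 1`), the reputation-based scheme
asymptotically identifies every Byzantine with probability one:
`lim_{T→∞} ∑_l P_l a(l,T) = 1`. -/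
theorem stmt_19
    (Qinv : ℝ → ℝ) (hQinv : ∀ y ∈ Set.Ioo (0 : ℝ) 1, gaussQ (Qinv y) = y)
    (P0 P1 : ℝ) (hP0 : 0 ≤ P0) (hP1 : 0 ≤ P1) (hP : P0 + P1 = 1)
    (δ : ℝ) (hδ : δ ∈ Set.Ioo (0 : ℝ) 1)
    (pH pB : ℕ → ℝ)
    (hpH : ∀ l < 2, pH l ∈ Set.Ioo (0 : ℝ) 1)
    (hpB : ∀ l < 2, pB l ∈ Set.Ioo (0 : ℝ) 1)
    (q : ℝ) (hq : q = max (pH 0) (pH 1))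
    (hqpB : q < min (pB 0) (pB 1))
    (η : ℝ → ℝ)
    (hη : ∀ T : ℝ, η T = T * q + Qinv δ * Real.sqrt (T * q * (1 - q)))
    (a : ℕ → ℝ → ℝ)
    (ha : ∀ l < 2, ∀ T : ℝ,
      a l T = gaussQ ((η T - T * pB l) / Real.sqrt (T * pB l * (1 - pB l)))) :
    Tendsto (fun T : ℝ => P0 * a 0 T + P1 * a 1 T) atTop (nhds 1) :=
  stmt_19_general Qinv P0 P1 hP δ pB hpB q hqpB η hη a ha
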